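/- arXiv:1905.08589 — 2 statements merged into one kernel-verified Lean document; each statement's English description precedes it below -/
import Mathlib

section
/- Let f : ℤ → ℤ be congruence preserving and tower-stable, and let n be a positive integer. Then there exists a nonnegative integer K such that λ_f^k(n) = 1 for all k ≥ K, where λ_f^k denotes the k-fold composite of the function λ_f : ℕ⁺ → ℕ⁺. -/
/-- `f : ℤ → ℤ` is congruence preserving if `n ∣ (s − t)` implies
`n ∣ (f(s) − f(t))` for every positive integer `n`. -/
def IsCongruencePreserving (f : ℤ → ℤ) : Prop :=
  ∀ (s t : ℤ) (n : ℕ), 0 < n → (n : ℤ) ∣ s - t → (n : ℤ) ∣ f s - f t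

/-- The reduction `f_m : ℤ/mℤ → ℤ/mℤ` of a map `f : ℤ → ℤ`. -/
def intReduction (f : ℤ → ℤ) (m : ℕ) : ZMod m → ZMod m :=
  fun x => ((f (x.val : ℤ) : ℤ) : ZMod m)

/-- The period of a self-map: the least positive `L` with `σ^[K+L] = σ^[K]`
for some `K`. -/
noncomputable def mapPeriod {F : Type*} (σ : F → F) : ℕ :=
  sInf {L : ℕ | 0 < L ∧ ∃ K : ℕ, σ^[K + L] = σ^[K]}

/-- `λ_f : ℕ → ℕ`, the period of the reduction of `f` modulo `n`. -/
noncomputable def lambdaF (f : ℤ → ℤ) : ℕ → ℕ :=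
  fun n => mapPeriod (intReduction f n)

/-- `σ` is a cyclic permutation of length `p` of its (finite) domain: it is a
bijection and the iterates of some element pass through all elements within
`p` steps. -/
def IsCyclicPermOfLength {F : Type*} (σ : F → F) (p : ℕ) : Prop :=
  Function.Bijective σ ∧ ∃ x : F, ∀ y : F, ∃ i : ℕ, i < p ∧ σ^[i] x = y

/-- A congruence preserving `f` is tower-stable if no reduction modulo a
prime `p` is a cyclic permutation of length `p`. -/
def TowerStable (f : ℤ → ℤ) : Prop :=
  ∀ p : ℕ, p.Prime → ¬ IsCyclicPermOfLength (intReduction f p) p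


/-!
Modulo a prime `p` the reduction `f_p` is not a `p`-cycle, so all its cycles have length `< p`
and `λ_f(p) ∣ (p - 1)!`. The fibres of `ℤ/p^(e+1) → ℤ/p^e` have `p` points, so along a fibre
the period grows by a factor `≤ p`, giving `λ_f(p^(e+1)) ∣ λ_f(p^e) · p!`; by the Chinese
remainder theorem `λ_f` of a coprime product divides every common multiple of the factors' values.
Hence if every prime factor of `n` is at most a prime `P`, the same holds for `λ_f(n)`, and
`v_P(λ_f(n)) < v_P(n)` when `P ∣ n`. A lexicographic induction on `(P, v_P(n))` concludes.
-/

open Function Nat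

section Dynamics

variable {α β : Type*} {σ : α → α}

theorem isPeriodicPt_iterate_of_le {L K K' : ℕ} {x : α} (h : IsPeriodicPt σ L (σ^[K] x))
    (hK : K ≤ K') : IsPeriodicPt σ L (σ^[K'] x) := by
  obtain ⟨j, rfl⟩ := Nat.exists_eq_add_of_le' hK
  rw [iterate_add_apply]
  exact h.apply_iterate j

theorem iterate_add_eq_iterate_iff {K L : ℕ} :
    σ^[K + L] = σ^[K] ↔ ∀ x, IsPeriodicPt σ L (σ^[K] x) := by
  simp only [funext_iff, add_comm K L, iterate_add_apply]
  rfl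

theorem mapPeriod_dvd_iff (σ : α → α) (L : ℕ) :
    mapPeriod σ ∣ L ↔ ∃ K, ∀ x, IsPeriodicPt σ L (σ^[K] x) := by
  set S := {L : ℕ | 0 < L ∧ ∃ K : ℕ, σ^[K + L] = σ^[K]}
  have hmem : ∀ {L} K, 0 < L → (∀ x, IsPeriodicPt σ L (σ^[K] x)) → L ∈ S :=
    fun K hL h => ⟨hL, K, iterate_add_eq_iterate_iff.mpr h⟩
  constructor
  · rintro ⟨t, rfl⟩
    rcases S.eq_empty_or_nonempty with hS | hS
    · have h0 : mapPeriod σ = 0 := (congrArg sInf hS).trans Nat.sInf_empty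
      refine ⟨0, fun x => ?_⟩
      rw [h0, zero_mul]
      exact isPeriodicPt_zero σ _
    · obtain ⟨-, K, hK⟩ := Nat.sInf_mem hS
      exact ⟨K, fun x => (iterate_add_eq_iterate_iff.mp hK x).mul_const t⟩
  · rintro ⟨K, hK⟩
    rcases L.eq_zero_or_pos with rfl | hL
    · exact dvd_zero _
    obtain ⟨hd, K', hK'⟩ := Nat.sInf_mem ⟨L, hmem K hL hK⟩
    set d := sInf S
    -- at a common starting time, every point is periodic with period `gcd d L`, so `d ≤ gcd d L`
    have hgcd : Nat.gcd d L ∈ S := hmem (max K K') (Nat.gcd_pos_of_pos_left L hd) fun x =>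
      (isPeriodicPt_iterate_of_le (iterate_add_eq_iterate_iff.mp hK' x) (le_max_right _ _)).gcd
        (isPeriodicPt_iterate_of_le (hK x) (le_max_left _ _))
    exact Nat.gcd_eq_left_iff_dvd.mp
      (le_antisymm (Nat.gcd_le_left L hd) (Nat.sInf_le hgcd))

theorem exists_isPeriodicPt_iterate_of_iterate_eq {a b N : ℕ} {x : α} (hab : a ≠ b)
    (ha : a ≤ N) (hb : b ≤ N) (h : σ^[a] x = σ^[b] x) :
    ∃ d, 0 < d ∧ d ≤ N ∧ IsPeriodicPt σ d (σ^[N] x) := by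
  wlog hlt : a < b generalizing a b
  · exact this hab.symm hb ha h.symm (by omega)
  refine ⟨b - a, by omega, by omega, isPeriodicPt_iterate_of_le (K := a) ?_ ha⟩
  rw [IsPeriodicPt, IsFixedPt, ← iterate_add_apply, Nat.sub_add_cancel hlt.le, h]

theorem isPeriodicPt_factorial_of_not_isCyclicPermOfLength [Fintype α]
    (hσ : ¬ IsCyclicPermOfLength σ (Fintype.card α)) (x : α) :
    IsPeriodicPt σ (Fintype.card α - 1)! (σ^[Fintype.card α] x) := by
  set N := Fintype.card α
  set y := σ^[N] x
  obtain ⟨i, j, hij, hxij⟩ := Fintype.exists_ne_map_eq_of_card_lt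
    (fun i : Fin (N + 1) => σ^[i] x) (by simp [N])
  obtain ⟨d, hd, -, hy⟩ := exists_isPeriodicPt_iterate_of_iterate_eq (Fin.val_ne_of_ne hij)
    (Nat.lt_succ_iff.mp i.2) (Nat.lt_succ_iff.mp j.2) hxij
  have hmin : 0 < minimalPeriod σ y := hy.minimalPeriod_pos hd
  refine isPeriodicPt_iff_minimalPeriod_dvd.mpr (Nat.dvd_factorial hmin ?_)
  by_contra! hN
  have hmin_eq : minimalPeriod σ y = N := le_antisymm minimalPeriod_le_card (by omega)
  -- a periodic orbit of length `card α` exhausts `α`, so `σ` would be a cyclic permutation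
  have horbit : Bijective fun i : Fin N => σ^[i] y := by
    refine (Fintype.bijective_iff_injective_and_card _).mpr ⟨fun i j hij => ?_, by simp [N]⟩
    exact Fin.ext (iterate_injOn_Iio_minimalPeriod (by simp [hmin_eq]) (by simp [hmin_eq]) hij)
  have hsurj : Surjective σ := by
    intro z
    obtain ⟨i, rfl⟩ := horbit.2 z
    refine ⟨σ^[i + (N - 1)] y, ?_⟩
    have hret : σ^[i + minimalPeriod σ y] y = σ^[i] y := iterate_add_minimalPeriod_eq
    rw [hmin_eq] at hret
    rwa [← iterate_succ_apply' σ, Nat.succ_eq_add_one, add_assoc, Nat.sub_add_cancel (by omega)]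
  exact hσ ⟨Finite.surjective_iff_bijective.mp hsurj, y, fun z =>
    let ⟨i, hi⟩ := horbit.2 z; ⟨i, i.2, hi⟩⟩

theorem isPeriodicPt_mul_factorial_of_semiconj {τ : β → β} {π : α → β} (hπ : Semiconj π σ τ)
    {c : ℕ} (q : α → Fin c) (hq : Injective fun a => (π a, q a)) {L : ℕ} {x : α}
    (hx : IsPeriodicPt τ L (π x)) : IsPeriodicPt σ (L * c !) (σ^[L * c] x) := by
  have hfiber : ∀ i : ℕ, π ((σ^[L])^[i] x) = π x := fun i => by
    rw [← iterate_mul, (hπ.iterate_right _).eq, (hx.mul_const i).eq]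
  obtain ⟨i, j, hij, hqij⟩ := Fintype.exists_ne_map_eq_of_card_lt
    (fun i : Fin (c + 1) => q ((σ^[L])^[i] x)) (by simp)
  obtain ⟨d, hd, hdc, hper⟩ := exists_isPeriodicPt_iterate_of_iterate_eq (Fin.val_ne_of_ne hij)
    (Nat.lt_succ_iff.mp i.2) (Nat.lt_succ_iff.mp j.2)
    (hq (Prod.ext (by simp only [hfiber]) hqij))
  have hper' : IsPeriodicPt σ (L * d) (σ^[L * c] x) := by
    rw [iterate_mul]
    unfold IsPeriodicPt IsFixedPt at hper ⊢
    rwa [iterate_mul]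
  exact hper'.trans_dvd (Nat.mul_dvd_mul_left L (Nat.dvd_factorial hd hdc))

end Dynamics

namespace ZMod

theorem injective_castHom_prod_castHom {m n : ℕ} (h : m.Coprime n) :
    Injective fun x : ZMod (m * n) =>
      (castHom (dvd_mul_right m n) (ZMod m) x, castHom (dvd_mul_left n m) (ZMod n) x) := by
  convert (chineseRemainder h).injective using 2 with x
  ext <;> simp [chineseRemainder, Prod.fst_zmod_cast, Prod.snd_zmod_cast]

theorem injective_castHom_prod_val_div (m c : ℕ) [NeZero (m * c)] :
    Injective fun x : ZMod (m * c) => (castHom (dvd_mul_right m c) (ZMod m) x,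
      (⟨x.val / m, Nat.div_lt_of_lt_mul x.val_lt⟩ : Fin c)) := by
  intro x y hxy
  simp only [Prod.mk.injEq, Fin.mk.injEq, castHom_apply, cast_eq_val] at hxy
  obtain ⟨hmod, hdiv⟩ := hxy
  have hmod' : x.val % m = y.val % m := by
    simpa only [val_natCast] using congrArg val hmod
  apply val_injective
  rw [← Nat.div_add_mod x.val m, ← Nat.div_add_mod y.val m, hdiv, hmod']

end ZMod

section Reduction

variable {f : ℤ → ℤ}

theorem IsCongruencePreserving.intCast_eq (hf : IsCongruencePreserving f) {m : ℕ} (hm : 0 < m)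
    {s t : ℤ} (h : (s : ZMod m) = t) : (f s : ZMod m) = f t := by
  rw [ZMod.intCast_eq_intCast_iff_dvd_sub] at h ⊢
  exact hf t s m hm h

theorem IsCongruencePreserving.semiconj_castHom (hf : IsCongruencePreserving f) {m n : ℕ}
    [NeZero n] (h : m ∣ n) :
    Semiconj (ZMod.castHom h (ZMod m)) (intReduction f n) (intReduction f m) := by
  have hm : 0 < m := Nat.pos_of_dvd_of_pos h (NeZero.pos n)
  have : NeZero m := ⟨hm.ne'⟩
  intro x
  simp only [intReduction, map_intCast]
  refine hf.intCast_eq hm ?_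
  rw [Int.cast_natCast, Int.cast_natCast, ZMod.natCast_val, ZMod.natCast_zmod_val,
    ZMod.castHom_apply]

theorem lambdaF_one : lambdaF f 1 = 1 :=
  Nat.dvd_one.mp ((mapPeriod_dvd_iff _ 1).mpr ⟨0, IsPeriodicPt.of_subsingleton _ _⟩)

theorem lambdaF_mul_dvd_of_coprime (hf : IsCongruencePreserving f) {a b L : ℕ}
    (hab : a.Coprime b) [NeZero (a * b)] (ha : lambdaF f a ∣ L) (hb : lambdaF f b ∣ L) :
    lambdaF f (a * b) ∣ L := by
  obtain ⟨Ka, hKa⟩ := (mapPeriod_dvd_iff _ L).mp ha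
  obtain ⟨Kb, hKb⟩ := (mapPeriod_dvd_iff _ L).mp hb
  refine (mapPeriod_dvd_iff _ L).mpr ⟨max Ka Kb, fun x => ZMod.injective_castHom_prod_castHom hab
    (Prod.ext ?_ ?_)⟩ <;> dsimp only
  · rw [((hf.semiconj_castHom _).iterate_right _).eq, ((hf.semiconj_castHom _).iterate_right _).eq]
    exact isPeriodicPt_iterate_of_le (hKa _) (le_max_left _ _)
  · rw [((hf.semiconj_castHom _).iterate_right _).eq, ((hf.semiconj_castHom _).iterate_right _).eq]
    exact isPeriodicPt_iterate_of_le (hKb _) (le_max_right _ _)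

theorem lambdaF_prime_dvd (hts : TowerStable f) {p : ℕ} (hp : p.Prime) :
    lambdaF f p ∣ (p - 1)! := by
  have := Fact.mk hp
  have hper := isPeriodicPt_factorial_of_not_isCyclicPermOfLength
    (σ := intReduction f p) (by rw [ZMod.card]; exact hts p hp)
  rw [ZMod.card] at hper
  exact (mapPeriod_dvd_iff _ _).mpr ⟨p, hper⟩

theorem lambdaF_mul_dvd (hf : IsCongruencePreserving f) (m c : ℕ) [NeZero (m * c)] :
    lambdaF f (m * c) ∣ lambdaF f m * c ! := by
  obtain ⟨K, hK⟩ := (mapPeriod_dvd_iff (intReduction f m) _).mp dvd_rfl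
  refine (mapPeriod_dvd_iff _ _).mpr ⟨lambdaF f m * c + K, fun x => ?_⟩
  rw [iterate_add_apply]
  refine isPeriodicPt_mul_factorial_of_semiconj (hf.semiconj_castHom _) _
    (ZMod.injective_castHom_prod_val_div m c) ?_
  rw [((hf.semiconj_castHom _).iterate_right _).eq]
  exact hK _

theorem lambdaF_prime_pow_dvd (hf : IsCongruencePreserving f) (hts : TowerStable f) {p : ℕ}
    (hp : p.Prime) (e : ℕ) : lambdaF f (p ^ (e + 1)) ∣ (p - 1)! ^ (e + 1) * p ^ e := by
  induction e with
  | zero => simpa using lambdaF_prime_dvd hts hp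
  | succ e ih =>
    have : NeZero (p ^ (e + 1) * p) := ⟨mul_ne_zero (pow_ne_zero _ hp.ne_zero) hp.ne_zero⟩
    calc lambdaF f (p ^ (e + 1 + 1)) = lambdaF f (p ^ (e + 1) * p) := by rw [pow_succ]
      _ ∣ lambdaF f (p ^ (e + 1)) * p ! := lambdaF_mul_dvd hf _ _
      _ ∣ (p - 1)! ^ (e + 1) * p ^ e * (p * (p - 1)!) := by
        rw [Nat.mul_factorial_pred hp.ne_zero]
        exact Nat.mul_dvd_mul_right ih _
      _ = (p - 1)! ^ (e + 1 + 1) * p ^ (e + 1) := by ring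

end Reduction

section Bound

/-- The exponent of `B` is `v_B(n) - 1` when `B` is a prime dividing `n`, and `0` otherwise
(`factorization` vanishes off the primes, and the subtraction truncates). -/
def periodBound (B n : ℕ) : ℕ := (B - 1)! ^ n * B ^ (n.factorization B - 1)

theorem periodBound_ne_zero {B : ℕ} (hB : 0 < B) (n : ℕ) : periodBound B n ≠ 0 :=
  mul_ne_zero (pow_ne_zero _ (factorial_ne_zero _)) (pow_ne_zero _ hB.ne')

theorem periodBound_dvd_periodBound (B : ℕ) {a n : ℕ} (h : a ∣ n) (hn : n ≠ 0) :
    periodBound B a ∣ periodBound B n := by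
  have ha : a ≠ 0 := ne_zero_of_dvd_ne_zero hn h
  refine Nat.mul_dvd_mul (pow_dvd_pow _ (Nat.le_of_dvd (Nat.pos_of_ne_zero hn) h))
    (pow_dvd_pow _ (Nat.sub_le_sub_right ?_ 1))
  exact (Nat.factorization_le_iff_dvd ha hn).mpr h B

theorem le_of_dvd_periodBound {B n q : ℕ} (hB : 0 < B) (hq : q.Prime)
    (h : q ∣ periodBound B n) : q ≤ B := by
  rcases (Nat.Prime.dvd_mul hq).mp h with h | h
  · exact ((hq.dvd_factorial).mp (hq.dvd_of_dvd_pow h)).trans (Nat.sub_le B 1)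
  · exact Nat.le_of_dvd hB (hq.dvd_of_dvd_pow h)

theorem factorization_periodBound_self {B : ℕ} (hB : B.Prime) (n : ℕ) :
    (periodBound B n).factorization B = n.factorization B - 1 := by
  have hfact : (B - 1)!.factorization B = 0 :=
    Nat.factorization_eq_zero_of_not_dvd fun h => by
      have := (hB.dvd_factorial).mp h
      have := hB.one_lt
      omega
  rw [periodBound, Nat.factorization_mul (pow_ne_zero _ (factorial_ne_zero _))
    (pow_ne_zero _ hB.ne_zero), Finsupp.add_apply, Nat.factorization_pow, Nat.factorization_pow,
    Finsupp.smul_apply, Finsupp.smul_apply, hfact, hB.factorization_self]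
  simp

end Bound

section Main

variable {f : ℤ → ℤ}

theorem lambdaF_dvd_periodBound (hf : IsCongruencePreserving f) (hts : TowerStable f) {B : ℕ}
    {n : ℕ} (hn : n ≠ 0) (hB : ∀ p, p.Prime → p ∣ n → p ≤ B) :
    lambdaF f n ∣ periodBound B n := by
  induction n using Nat.recOnPosPrimePosCoprime with
  | zero => exact absurd rfl hn
  | one => simp [lambdaF_one]
  | prime_pow p k hp hk =>
    obtain ⟨e, rfl⟩ : ∃ e, k = e + 1 := ⟨k - 1, by omega⟩
    refine (lambdaF_prime_pow_dvd hf hts hp e).trans ?_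
    have hpB : p ≤ B := hB p hp (dvd_pow_self p (by omega))
    have hexp : e + 1 ≤ p ^ (e + 1) := (Nat.lt_pow_self hp.one_lt).le
    rcases hpB.eq_or_lt with rfl | hpB
    · rw [periodBound, hp.factorization_pow, Finsupp.single_eq_same]
      exact Nat.mul_dvd_mul_right (pow_dvd_pow _ (by omega)) _
    · calc (p - 1)! ^ (e + 1) * p ^ e ∣ ((p - 1)! * p) ^ (e + 1) := by
            rw [mul_pow]
            exact Nat.mul_dvd_mul_left _ (pow_dvd_pow _ (by omega))
        _ ∣ (B - 1)! ^ p ^ (e + 1) := by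
            rw [mul_comm, Nat.mul_factorial_pred hp.ne_zero]
            exact (pow_dvd_pow_of_dvd (Nat.factorial_dvd_factorial (by omega)) _).trans
              (pow_dvd_pow _ hexp)
        _ ∣ periodBound B (p ^ (e + 1)) := dvd_mul_right _ _
  | coprime a b _ _ hab iha ihb =>
    have : NeZero (a * b) := ⟨hn⟩
    have hdvd : ∀ d, d ∣ a * b → lambdaF f d ∣ periodBound B d →
        lambdaF f d ∣ periodBound B (a * b) :=
      fun d hd h => h.trans (periodBound_dvd_periodBound B hd hn)
    exact lambdaF_mul_dvd_of_coprime hf hab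
      (hdvd a (dvd_mul_right a b) (iha (left_ne_zero_of_mul hn) fun p hp h =>
        hB p hp (h.trans (dvd_mul_right a b))))
      (hdvd b (dvd_mul_left b a) (ihb (right_ne_zero_of_mul hn) fun p hp h =>
        hB p hp (h.trans (dvd_mul_left b a))))

theorem exists_iterate_lambdaF_eq_one_of_prime_le (hf : IsCongruencePreserving f)
    (hts : TowerStable f) (B : ℕ) :
    ∀ n, n ≠ 0 → (∀ p, p.Prime → p ∣ n → p ≤ B) →
      ∃ K, ∀ k, K ≤ k → (lambdaF f)^[k] n = 1 := by
  induction B using Nat.strong_induction_on with | _ B ihB =>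
  intro n
  induction hv : n.factorization B using Nat.strong_induction_on generalizing n with | _ v ihv =>
  intro hn hnB
  obtain rfl | hn1 := eq_or_ne n 1
  · exact ⟨0, fun k _ => iterate_fixed lambdaF_one k⟩
  obtain ⟨q, hq, hqn⟩ := Nat.exists_prime_and_dvd hn1
  have hB : 0 < B := hq.pos.trans_le (hnB q hq hqn)
  have hm := lambdaF_dvd_periodBound hf hts hn hnB
  have hm0 : lambdaF f n ≠ 0 := ne_zero_of_dvd_ne_zero (periodBound_ne_zero hB n) hm
  suffices ∃ K, ∀ k, K ≤ k → (lambdaF f)^[k] (lambdaF f n) = 1 by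
    obtain ⟨K, hK⟩ := this
    refine ⟨K + 1, fun k hk => ?_⟩
    obtain ⟨j, rfl⟩ : ∃ j, k = j + 1 := ⟨k - 1, by omega⟩
    exact hK j (by omega)
  rcases eq_or_ne v 0 with rfl | hv0
  · -- here `periodBound B n = (B - 1)! ^ n`, whose prime factors lie below `B`
    refine ihB (B - 1) (by omega) _ hm0 fun p hp hpm => ?_
    rw [periodBound, hv, zero_tsub, pow_zero, mul_one] at hm
    exact (hp.dvd_factorial).mp (hp.dvd_of_dvd_pow (hpm.trans hm))
  · have hBp : B.Prime := Nat.prime_of_mem_primeFactors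
      (n.support_factorization ▸ Finsupp.mem_support_iff.mpr (hv ▸ hv0))
    refine ihv _ ?_ _ rfl hm0 fun p hp hpm => le_of_dvd_periodBound hB hp (hpm.trans hm)
    have := (Nat.factorization_le_iff_dvd hm0 (periodBound_ne_zero hB n)).mpr hm B
    rw [factorization_periodBound_self hBp, hv] at this
    omega

end Main

/-- for a tower-stable congruence preserving `f`, the iterates
of `λ_f` at `n` are eventually `1`. -/
theorem stmt_14 (f : ℤ → ℤ) (hf : IsCongruencePreserving f)
    (hts : TowerStable f) (n : ℕ) (hn : 0 < n) :
    ∃ K : ℕ, ∀ k : ℕ, K ≤ k → (lambdaF f)^[k] n = 1 :=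
  exists_iterate_lambdaF_eq_one_of_prime_le hf hts n n hn.ne' fun _ _ h => Nat.le_of_dvd hn h
end

section
/- Let f be a tower-stable polynomial with integer coefficients, a an integer, p a prime number, and k a positive integer. If p does not divide the mod-p multiplier μ_p of f at a, then ρ_{f,a}(p^k) = ρ_{f,a}(p) and λ_{f,a}(p^k) divides λ_{f,a}(p)·(p − 1)·p^{k−1}. -/
/-- The reduction `f_m : ℤ/mℤ → ℤ/mℤ` of a polynomial `f ∈ ℤ[x]`. -/
def polyRed (f : Polynomial ℤ) (m : ℕ) : ZMod m → ZMod m :=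
  fun x => Polynomial.eval₂ (Int.castRingHom (ZMod m)) x f

/-- A polynomial `f ∈ ℤ[x]` is tower-stable if no reduction modulo a prime
`q` is a cyclic permutation of length `q`. -/
def PolyTowerStable (f : Polynomial ℤ) : Prop :=
  ∀ q : ℕ, q.Prime → ¬ IsCyclicPermOfLength (polyRed f q) q

/-- `ρ_{f,a}(n)`: the tail length of the reduction of `f` mod `n` at the class
of `a`, i.e. the least `k` with `f^{k+l}(a) ≡ f^k(a) (mod n)` for some `l > 0`. -/
noncomputable def polyTail (f : Polynomial ℤ) (a : ℤ) (n : ℕ) : ℕ :=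
  sInf {k : ℕ | ∃ l : ℕ, 0 < l ∧
    (n : ℤ) ∣ (fun z => f.eval z)^[k + l] a - (fun z => f.eval z)^[k] a}

/-- `λ_{f,a}(n)`: the cycle length of the reduction of `f` mod `n` at the class
of `a`, i.e. the least `l > 0` with `f^{k+l}(a) ≡ f^k(a) (mod n)` for some `k`. -/
noncomputable def polyCycle (f : Polynomial ℤ) (a : ℤ) (n : ℕ) : ℕ :=
  sInf {l : ℕ | 0 < l ∧ ∃ k : ℕ,
    (n : ℤ) ∣ (fun z => f.eval z)^[k + l] a - (fun z => f.eval z)^[k] a}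

/-- The `m`-th iterate of `f` as a polynomial. -/
noncomputable def polyIter (f : Polynomial ℤ) (m : ℕ) : Polynomial ℤ :=
  (fun q => q.comp f)^[m] Polynomial.X

/-- The mod `p` multiplier `μ_p = (f^{λ(p)})'(f^{ρ(p)}(a))` of `f` at `a`. -/
noncomputable def muP (f : Polynomial ℤ) (a : ℤ) (p : ℕ) : ℤ :=
  (Polynomial.derivative (polyIter f (polyCycle f a p))).eval
    ((fun z => f.eval z)^[polyTail f a p] a)

/-
Put `x = f^ρ(a)` with `ρ = ρ(p)`, `λ = λ(p)`. Then `g = f^λ` fixes `x` mod `p` with multiplier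
`μ_p`, a unit mod `p`, so by Fermat `h = g^(p-1)` fixes `x` mod `p` with `h'(x) ≡ 1 (mod p)`.
For such an `h`, if `q = h^(p^K)` fixes `x` mod `p^(K+1)`, a first-order Taylor expansion gives
`q^j(x) ≡ x + j (q(x) - x) (mod p^(K+2))`, and `j = p` shows that `h^(p^(K+1))` fixes `x`
mod `p^(K+2)`. So `f^(ρ + λ(p-1)p^(k-1))(a) ≡ f^ρ(a) (mod p^k)`, which bounds `ρ(p^k) ≤ ρ(p)` and
gives the divisibility for `λ(p^k)`; `ρ(p) ≤ ρ(p^k)` because reduction mod `p` is a factor of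
reduction mod `p^k`.
-/

open Polynomial Function

section OrbitLengths

variable {X : Type*}

noncomputable def tailLength (F : X → X) (x : X) : ℕ :=
  sInf {k | F^[k] x ∈ periodicPts F}

noncomputable def cycleLength (F : X → X) (x : X) : ℕ :=
  sInf {l | 0 < l ∧ ∃ k, IsPeriodicPt F l (F^[k] x)}

variable {F : X → X} {x : X}

theorem exists_iterate_mem_periodicPts [Finite X] (F : X → X) (x : X) :
    ∃ k, F^[k] x ∈ periodicPts F := by
  obtain ⟨i, j, hij, heq⟩ := Finite.exists_ne_map_eq_of_infinite (fun n => F^[n] x)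
  wlog hlt : i < j generalizing i j
  · exact this j i hij.symm heq.symm (by omega)
  refine ⟨i, mk_mem_periodicPts (Nat.sub_pos_of_lt hlt) ?_⟩
  simp only [IsPeriodicPt, IsFixedPt, ← iterate_add_apply, Nat.sub_add_cancel hlt.le]
  exact heq.symm

theorem tailLength_le {k : ℕ} (h : F^[k] x ∈ periodicPts F) : tailLength F x ≤ k :=
  Nat.sInf_le h

theorem iterate_tailLength_mem_periodicPts {k : ℕ} (h : F^[k] x ∈ periodicPts F) :
    F^[tailLength F x] x ∈ periodicPts F :=
  Nat.sInf_mem (s := {k | F^[k] x ∈ periodicPts F}) ⟨k, h⟩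

theorem tailLength_le_of_semiconj {Y : Type*} {G : Y → Y} {π : X → Y} (hπ : Semiconj π F G)
    {k : ℕ} (h : F^[k] x ∈ periodicPts F) : tailLength G (π x) ≤ tailLength F x := by
  apply tailLength_le
  rw [← (hπ.iterate_right _) x]
  exact hπ.mapsTo_periodicPts (iterate_tailLength_mem_periodicPts h)

theorem minimalPeriod_iterate_eq_of_mem_periodicPts {i j : ℕ} (hi : F^[i] x ∈ periodicPts F)
    (hj : F^[j] x ∈ periodicPts F) :
    minimalPeriod F (F^[i] x) = minimalPeriod F (F^[j] x) := by
  rw [← minimalPeriod_apply_iterate hi j, ← minimalPeriod_apply_iterate hj i,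
    ← iterate_add_apply, ← iterate_add_apply, add_comm]

theorem cycleLength_eq_minimalPeriod {k : ℕ} (h : F^[k] x ∈ periodicPts F) :
    cycleLength F x = minimalPeriod F (F^[k] x) := by
  have hmem : minimalPeriod F (F^[k] x) ∈ {l | 0 < l ∧ ∃ k, IsPeriodicPt F l (F^[k] x)} :=
    ⟨minimalPeriod_pos_of_mem_periodicPts h, k, isPeriodicPt_minimalPeriod F _⟩
  refine le_antisymm (Nat.sInf_le hmem) (le_csInf ⟨_, hmem⟩ ?_)
  rintro l ⟨hl, j, hj⟩
  rw [minimalPeriod_iterate_eq_of_mem_periodicPts h (mk_mem_periodicPts hl hj)]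
  exact hj.minimalPeriod_le hl

end OrbitLengths

section Reduction

variable (f : ℤ[X])

theorem semiconj_intCast_polyRed (n : ℕ) :
    Semiconj (Int.cast : ℤ → ZMod n) (fun z => f.eval z) (polyRed f n) := fun z => by
  simp [polyRed, eval₂_at_intCast]

theorem semiconj_castHom_polyRed {m n : ℕ} (hmn : m ∣ n) :
    Semiconj (ZMod.castHom hmn (ZMod m)) (polyRed f n) (polyRed f m) := fun z => by
  simp only [polyRed, hom_eval₂, RingHom.ext_int ((ZMod.castHom hmn (ZMod m)).comp _)
    (Int.castRingHom (ZMod m))]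

theorem intCast_iterate_eval (n m : ℕ) (z : ℤ) :
    (((fun z => f.eval z)^[m] z : ℤ) : ZMod n) = (polyRed f n)^[m] z :=
  (semiconj_intCast_polyRed f n).iterate_right m z

theorem dvd_iterate_sub_iff_isPeriodicPt (a : ℤ) (n k l : ℕ) :
    (n : ℤ) ∣ (fun z => f.eval z)^[k + l] a - (fun z => f.eval z)^[k] a ↔
      IsPeriodicPt (polyRed f n) l ((polyRed f n)^[k] a) := by
  rw [← ZMod.intCast_eq_intCast_iff_dvd_sub, intCast_iterate_eval, intCast_iterate_eval, eq_comm,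
    add_comm, iterate_add_apply]
  rfl

theorem iterate_modEq_iff_isPeriodicPt {a : ℤ} {n k l : ℕ} :
    (fun z => f.eval z)^[l] ((fun z => f.eval z)^[k] a) ≡ (fun z => f.eval z)^[k] a [ZMOD n] ↔
      IsPeriodicPt (polyRed f n) l ((polyRed f n)^[k] a) := by
  rw [← ZMod.intCast_eq_intCast_iff, intCast_iterate_eval, intCast_iterate_eval]
  rfl

theorem polyTail_eq_tailLength (a : ℤ) (n : ℕ) :
    polyTail f a n = tailLength (polyRed f n) a := by
  simp only [polyTail, tailLength, dvd_iterate_sub_iff_isPeriodicPt, mem_periodicPts, gt_iff_lt]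

theorem polyCycle_eq_cycleLength (a : ℤ) (n : ℕ) :
    polyCycle f a n = cycleLength (polyRed f n) a := by
  simp only [polyCycle, cycleLength, dvd_iterate_sub_iff_isPeriodicPt]

variable {f} {a : ℤ} {n k l : ℕ}

theorem polyTail_le_of_modEq (hl : 0 < l)
    (h : (fun z => f.eval z)^[l] ((fun z => f.eval z)^[k] a) ≡
      (fun z => f.eval z)^[k] a [ZMOD n]) :
    polyTail f a n ≤ k := by
  rw [polyTail_eq_tailLength]
  exact tailLength_le (mk_mem_periodicPts hl (iterate_modEq_iff_isPeriodicPt f |>.1 h))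

theorem polyCycle_dvd_of_modEq (hl : 0 < l)
    (h : (fun z => f.eval z)^[l] ((fun z => f.eval z)^[k] a) ≡
      (fun z => f.eval z)^[k] a [ZMOD n]) :
    polyCycle f a n ∣ l := by
  have hper := iterate_modEq_iff_isPeriodicPt f |>.1 h
  rw [polyCycle_eq_cycleLength, cycleLength_eq_minimalPeriod (mk_mem_periodicPts hl hper)]
  exact hper.minimalPeriod_dvd

variable [NeZero n]

theorem polyTail_le_polyTail_of_dvd {m : ℕ} (hmn : m ∣ n) :
    polyTail f a m ≤ polyTail f a n := by
  obtain ⟨k, hk⟩ := exists_iterate_mem_periodicPts (polyRed f n) a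
  rw [polyTail_eq_tailLength, polyTail_eq_tailLength, ← map_intCast (ZMod.castHom hmn (ZMod m))]
  exact tailLength_le_of_semiconj (semiconj_castHom_polyRed f hmn) hk

theorem iterate_mem_periodicPts_polyTail :
    (polyRed f n)^[polyTail f a n] a ∈ periodicPts (polyRed f n) := by
  obtain ⟨k, hk⟩ := exists_iterate_mem_periodicPts (polyRed f n) a
  rw [polyTail_eq_tailLength]
  exact iterate_tailLength_mem_periodicPts hk

theorem polyCycle_pos : 0 < polyCycle f a n := by
  rw [polyCycle_eq_cycleLength, cycleLength_eq_minimalPeriod iterate_mem_periodicPts_polyTail]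
  exact minimalPeriod_pos_of_mem_periodicPts iterate_mem_periodicPts_polyTail

theorem iterate_polyCycle_modEq :
    (fun z => f.eval z)^[polyCycle f a n] ((fun z => f.eval z)^[polyTail f a n] a) ≡
      (fun z => f.eval z)^[polyTail f a n] a [ZMOD n] := by
  rw [iterate_modEq_iff_isPeriodicPt, polyCycle_eq_cycleLength,
    cycleLength_eq_minimalPeriod iterate_mem_periodicPts_polyTail]
  exact isPeriodicPt_minimalPeriod _ _

end Reduction

theorem Int.ModEq.polynomial_eval {n a b : ℤ} (g : ℤ[X]) (h : a ≡ b [ZMOD n]) :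
    g.eval a ≡ g.eval b [ZMOD n] :=
  Int.modEq_iff_dvd.2 ((Int.modEq_iff_dvd.1 h).trans (sub_dvd_eval_sub b a g))

section Lifting

variable {n x : ℤ} {h : ℤ[X]}

theorem polyIter_succ (f : ℤ[X]) (m : ℕ) : polyIter f (m + 1) = (polyIter f m).comp f := by
  simp only [polyIter, iterate_succ_apply']

theorem eval_polyIter (f : ℤ[X]) (m : ℕ) :
    (fun z => (polyIter f m).eval z) = (fun z => f.eval z)^[m] := by
  induction m with
  | zero => ext; simp [polyIter]
  | succ m ih => ext z; rw [polyIter_succ, iterate_succ_apply, ← ih]; simp [eval_comp]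

theorem iterate_eval_modEq (hx : h.eval x ≡ x [ZMOD n]) (m : ℕ) :
    (fun z => h.eval z)^[m] x ≡ x [ZMOD n] := by
  induction m with
  | zero => rfl
  | succ m ih => rw [iterate_succ_apply']; exact (ih.polynomial_eval h).trans hx

theorem derivative_polyIter_eval_modEq (hx : h.eval x ≡ x [ZMOD n]) (m : ℕ) :
    (derivative (polyIter h m)).eval x ≡ (derivative h).eval x ^ m [ZMOD n] := by
  induction m with
  | zero => simp [polyIter]
  | succ m ih =>
    rw [polyIter_succ, derivative_comp, eval_mul, eval_comp, pow_succ']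
    exact ((hx.polynomial_eval _).trans ih).mul_left _

theorem eval_add_modEq {P t : ℤ} {k : ℕ} (hk : 1 ≤ k) (ht : P ^ k ∣ t)
    (hd : (derivative h).eval x ≡ 1 [ZMOD P]) :
    h.eval (x + t) ≡ h.eval x + t [ZMOD P ^ (k + 1)] := by
  obtain ⟨c, hc⟩ := h.binomExpansion x t
  set μ := (derivative h).eval x
  have hlin : P ^ (k + 1) ∣ (μ - 1) * t := by
    rw [pow_succ']; exact mul_dvd_mul (Int.modEq_iff_dvd.1 hd.symm) ht
  have hquad : P ^ (k + 1) ∣ c * t ^ 2 :=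
    ((pow_dvd_pow P (by omega : k + 1 ≤ k + k)).trans
      (by rw [pow_add, sq]; exact mul_dvd_mul ht ht)).mul_left c
  rw [hc, add_assoc]
  refine Int.ModEq.add_left _ (Int.modEq_iff_dvd.2 ?_)
  rw [show t - (μ * t + c * t ^ 2) = -((μ - 1) * t + c * t ^ 2) by ring, dvd_neg]
  exact hlin.add hquad

theorem iterate_eval_modEq_linear {P : ℤ} {k : ℕ} (hk : 1 ≤ k)
    (hx : h.eval x ≡ x [ZMOD P ^ k]) (hd : (derivative h).eval x ≡ 1 [ZMOD P]) (j : ℕ) :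
    (fun z => h.eval z)^[j] x ≡ x + j * (h.eval x - x) [ZMOD P ^ (k + 1)] := by
  induction j with
  | zero => simp
  | succ j ih =>
    set t := (fun z => h.eval z)^[j] x - x
    have ht : P ^ k ∣ t := Int.ModEq.dvd (iterate_eval_modEq hx j).symm
    calc (fun z => h.eval z)^[j + 1] x = h.eval (x + t) := by
          rw [iterate_succ_apply', add_sub_cancel]
      _ ≡ h.eval x + t [ZMOD P ^ (k + 1)] := eval_add_modEq hk ht hd
      _ ≡ h.eval x + j * (h.eval x - x) [ZMOD P ^ (k + 1)] :=
          Int.ModEq.add_left _ (by simpa [t] using ih.sub_right x)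
      _ = x + (j + 1 : ℕ) * (h.eval x - x) := by push_cast; ring

theorem iterate_eval_pow_modEq {p : ℕ} (hx : h.eval x ≡ x [ZMOD p])
    (hd : (derivative h).eval x ≡ 1 [ZMOD p]) (K : ℕ) :
    (fun z => h.eval z)^[p ^ K] x ≡ x [ZMOD p ^ (K + 1)] := by
  induction K with
  | zero => simpa using hx
  | succ K ih =>
    set q := polyIter h (p ^ K)
    have hq : (fun z => q.eval z) = (fun z => h.eval z)^[p ^ K] := eval_polyIter h _
    have hqx : q.eval x ≡ x [ZMOD p ^ (K + 1)] := by rw [congrFun hq x]; exact ih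
    have hqd : (derivative q).eval x ≡ 1 [ZMOD p] := by
      simpa using (derivative_polyIter_eval_modEq hx _).trans (hd.pow (p ^ K))
    have hlin := iterate_eval_modEq_linear (by omega) hqx hqd p
    rw [show p ^ (K + 1) = p ^ K * p from pow_succ p K, iterate_mul, ← hq]
    refine hlin.trans (Int.modEq_iff_dvd.2 ?_).symm
    rw [add_sub_cancel_left, pow_succ']
    exact mul_dvd_mul_left _ (Int.modEq_iff_dvd.1 hqx.symm)

end Lifting

theorem iterate_modEq_of_not_dvd_multiplier (f : ℤ[X]) {x : ℤ} {m p : ℕ} (hp : p.Prime)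
    (hx : (fun z => f.eval z)^[m] x ≡ x [ZMOD p])
    (hμ : ¬ (p : ℤ) ∣ (derivative (polyIter f m)).eval x) (K : ℕ) :
    (fun z => f.eval z)^[m * (p - 1) * p ^ K] x ≡ x [ZMOD p ^ (K + 1)] := by
  set g := polyIter f m
  have hgx : g.eval x ≡ x [ZMOD p] := by rwa [← eval_polyIter f m] at hx
  have hcop : IsCoprime ((derivative g).eval x) p :=
    ((Nat.prime_iff_prime_int.mp hp).coprime_iff_not_dvd.2 hμ).symm
  have hlift := iterate_eval_pow_modEq (h := polyIter g (p - 1)) (x := x)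
    (by rw [congrFun (eval_polyIter g _) x]; exact iterate_eval_modEq hgx _)
    ((derivative_polyIter_eval_modEq hgx _).trans (Int.ModEq.pow_card_sub_one_eq_one hp hcop)) K
  rwa [eval_polyIter, eval_polyIter, ← iterate_mul, ← iterate_mul, ← mul_assoc] at hlift

theorem stmt_16_general (f : Polynomial ℤ) (a : ℤ)
    (p : ℕ) (hp : p.Prime) (k : ℕ) (hk : 0 < k)
    (hmu : ¬ (p : ℤ) ∣ muP f a p) :
    polyTail f a (p ^ k) = polyTail f a p ∧
      polyCycle f a (p ^ k) ∣ polyCycle f a p * (p - 1) * p ^ (k - 1) := by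
  have : Fact p.Prime := ⟨hp⟩
  have hlift := iterate_modEq_of_not_dvd_multiplier f hp iterate_polyCycle_modEq hmu (k - 1)
  rw [Nat.sub_add_cancel hk, ← Nat.cast_pow] at hlift
  have hL : 0 < polyCycle f a p * (p - 1) * p ^ (k - 1) :=
    Nat.mul_pos (Nat.mul_pos polyCycle_pos (Nat.sub_pos_of_lt hp.one_lt)) (pow_pos hp.pos _)
  exact ⟨(polyTail_le_of_modEq hL hlift).antisymm
    (polyTail_le_polyTail_of_dvd (dvd_pow_self p hk.ne')), polyCycle_dvd_of_modEq hL hlift⟩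

theorem stmt_16 (f : Polynomial ℤ) (hts : PolyTowerStable f) (a : ℤ)
    (p : ℕ) (hp : p.Prime) (k : ℕ) (hk : 0 < k)
    (hmu : ¬ (p : ℤ) ∣ muP f a p) :
    polyTail f a (p ^ k) = polyTail f a p ∧
      polyCycle f a (p ^ k) ∣ polyCycle f a p * (p - 1) * p ^ (k - 1) :=
  stmt_16_general f a p hp k hk hmu
end
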